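/- arXiv:1302.0181 — 4 statements merged into one kernel-verified Lean document; each statement's English description precedes it below -/
import Mathlib

section
/- Let T and C be real-valued random variables that are conditionally independent given a random variable Z, let Y = min(T, C), and let t : (range of Z) → ℝ be measurable. Then almost surely E[𝟙(Y ≥ t(Z)) | Z] = P(T ≥ t(Z) | Z) · P(C ≥ t(Z) | Z). -/
open MeasureTheory ProbabilityTheory

/-!
Conditionally on `Z`, the σ-algebras generated by `T` and `C` stay independent after each is
enlarged by `σ(Z)`, because `σ(Z)`-measurable factors pull out of conditional expectations. The
events `{t(Z) ≤ T}` and `{t(Z) ≤ C}` lie in these enlarged σ-algebras and their intersection is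
`{t(Z) ≤ min(T, C)}`.
-/

open Set in
theorem MeasurableSpace.sup_eq_generateFrom_image2_inter {Ω : Type*}
    (m₁ m₂ : MeasurableSpace Ω) :
    m₁ ⊔ m₂ =
      generateFrom (image2 (· ∩ ·) {s | MeasurableSet[m₁] s} {s | MeasurableSet[m₂] s}) := by
  refine le_antisymm (sup_le (fun s hs ↦ ?_) (fun s hs ↦ ?_)) (generateFrom_le ?_)
  · exact measurableSet_generateFrom ⟨s, hs, univ, .univ, inter_univ s⟩
  · exact measurableSet_generateFrom ⟨univ, .univ, s, hs, univ_inter s⟩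
  · rintro _ ⟨s, hs, t, ht, rfl⟩
    exact (le_sup_left (a := m₁) _ hs).inter (le_sup_right (a := m₁) _ ht)

open Set in
theorem isPiSystem_image2_inter {Ω : Type*} {C D : Set (Set Ω)} (hC : IsPiSystem C)
    (hD : IsPiSystem D) : IsPiSystem (image2 (· ∩ ·) C D) := by
  rintro _ ⟨s₁, hs₁, t₁, ht₁, rfl⟩ _ ⟨s₂, hs₂, t₂, ht₂, rfl⟩ hne
  refine ⟨s₁ ∩ s₂, hC _ hs₁ _ hs₂ ?_, t₁ ∩ t₂, hD _ ht₁ _ ht₂ ?_,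
    inter_inter_inter_comm _ _ _ _⟩
  · exact hne.mono fun ω h ↦ ⟨h.1.1, h.2.1⟩
  · exact hne.mono fun ω h ↦ ⟨h.1.2, h.2.2⟩

theorem condExp_inter_ae_eq_indicator {Ω : Type*} {m mΩ : MeasurableSpace Ω} {μ : Measure Ω}
    [IsFiniteMeasure μ] {s t : Set Ω} (hs : MeasurableSet[m] s) (ht : MeasurableSet t) :
    μ⟦s ∩ t | m⟧ =ᵐ[μ] s.indicator (μ⟦t | m⟧) := by
  rw [← Set.indicator_indicator]
  exact condExp_indicator ((integrable_const 1).indicator ht) hs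

theorem ProbabilityTheory.CondIndep.sup_sup {Ω : Type*} {m' m₁ m₂ mΩ : MeasurableSpace Ω}
    [StandardBorelSpace Ω] {hm' : m' ≤ mΩ} {μ : Measure Ω} [IsFiniteMeasure μ]
    (h₁ : m₁ ≤ mΩ) (h₂ : m₂ ≤ mΩ) (h : CondIndep m' m₁ m₂ hm' μ) :
    CondIndep m' (m' ⊔ m₁) (m' ⊔ m₂) hm' μ := by
  have hπ (mi : MeasurableSpace Ω) := isPiSystem_image2_inter
    (@MeasurableSpace.isPiSystem_measurableSet _ m')
    (@MeasurableSpace.isPiSystem_measurableSet _ mi)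
  refine CondIndepSets.condIndep (sup_le hm' h₁) (sup_le hm' h₂) (hπ m₁) (hπ m₂)
    (MeasurableSpace.sup_eq_generateFrom_image2_inter _ _)
    (MeasurableSpace.sup_eq_generateFrom_image2_inter _ _) ?_
  rw [condIndepSets_iff]
  rotate_left
  · rintro _ ⟨a, ha, s, hs, rfl⟩; exact (hm' _ ha).inter (h₁ _ hs)
  · rintro _ ⟨a, ha, s, hs, rfl⟩; exact (hm' _ ha).inter (h₂ _ hs)
  rintro _ _ ⟨a₁, ha₁, s₁, hs₁, rfl⟩ ⟨a₂, ha₂, s₂, hs₂, rfl⟩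
  have hindep := (condIndep_iff _ _ _ hm' h₁ h₂ μ).mp h s₁ s₂ hs₁ hs₂
  calc μ⟦a₁ ∩ s₁ ∩ (a₂ ∩ s₂) | m'⟧
      = μ⟦(a₁ ∩ a₂) ∩ (s₁ ∩ s₂) | m'⟧ := by rw [Set.inter_inter_inter_comm]
    _ =ᵐ[μ] (a₁ ∩ a₂).indicator (μ⟦s₁ ∩ s₂ | m'⟧) :=
      condExp_inter_ae_eq_indicator (ha₁.inter ha₂) ((h₁ _ hs₁).inter (h₂ _ hs₂))
    _ =ᵐ[μ] (a₁ ∩ a₂).indicator (μ⟦s₁ | m'⟧ * μ⟦s₂ | m'⟧) := hindep.indicator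
    _ = a₁.indicator (μ⟦s₁ | m'⟧) * a₂.indicator (μ⟦s₂ | m'⟧) :=
      funext (Set.inter_indicator_mul _ _)
    _ =ᵐ[μ] μ⟦a₁ ∩ s₁ | m'⟧ * μ⟦a₂ ∩ s₂ | m'⟧ :=
      (condExp_inter_ae_eq_indicator ha₁ (h₁ _ hs₁)).symm.mul
        (condExp_inter_ae_eq_indicator ha₂ (h₂ _ hs₂)).symm

theorem condexp_indicator_min_eq_product_general
    {Ω : Type*} [mΩ : MeasurableSpace Ω] [StandardBorelSpace Ω]
    (μ : Measure Ω) [IsProbabilityMeasure μ]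
    {γ : Type*} [mγ : MeasurableSpace γ]
    (T C : Ω → ℝ) (hT : Measurable T) (hC : Measurable C)
    (Z : Ω → γ) (hZ : Measurable Z)
    (hTC : CondIndepFun (MeasurableSpace.comap Z mγ) (hZ.comap_le) T C μ)
    (Y : Ω → ℝ) (hY : ∀ ω, Y ω = min (T ω) (C ω))
    (t : γ → ℝ) (ht : Measurable t) :
    condExp (MeasurableSpace.comap Z mγ) μ
        (Set.indicator {ω | t (Z ω) ≤ Y ω} (fun _ => (1:ℝ)))
      =ᵐ[μ]
    fun ω =>
      condExp (MeasurableSpace.comap Z mγ) μ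
          (Set.indicator {ω' | t (Z ω') ≤ T ω'} (fun _ => (1:ℝ))) ω *
      condExp (MeasurableSpace.comap Z mγ) μ
          (Set.indicator {ω' | t (Z ω') ≤ C ω'} (fun _ => (1:ℝ))) ω := by
  have hmin : {ω | t (Z ω) ≤ Y ω} = {ω | t (Z ω) ≤ T ω} ∩ {ω | t (Z ω) ≤ C ω} := by
    ext ω
    simp only [Set.mem_ofPred_eq, Set.mem_inter_iff, hY ω, le_min_iff]
  have htZ (m : MeasurableSpace Ω) : Measurable[mγ.comap Z ⊔ m] (t ∘ Z) :=
    (ht.comp (comap_measurable Z)).mono le_sup_left le_rfl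
  have hTC_sup := CondIndep.sup_sup hT.comap_le hC.comap_le hTC
  have hsets := hTC_sup.condIndepSet_of_measurableSet
    (measurableSet_le (htZ _) ((comap_measurable T).mono le_sup_right le_rfl))
    (measurableSet_le (htZ _) ((comap_measurable C).mono le_sup_right le_rfl))
  rw [hmin]
  exact (condIndepSet_iff _ _ _ _ (measurableSet_le (ht.comp hZ) hT)
    (measurableSet_le (ht.comp hZ) hC) μ).mp hsets

/-- If `T` and `C` are conditionally independent given `Z` and `Y = min(T, C)`, then for
measurable `t`, almost surely
`E[𝟙(Y ≥ t(Z)) | Z] = P(T ≥ t(Z) | Z) · P(C ≥ t(Z) | Z)`. -/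
theorem condexp_indicator_min_eq_product
    {Ω : Type*} [mΩ : MeasurableSpace Ω] [StandardBorelSpace Ω] [Nonempty Ω]
    (μ : Measure Ω) [IsProbabilityMeasure μ]
    {γ : Type*} [mγ : MeasurableSpace γ]
    (T C : Ω → ℝ) (hT : Measurable T) (hC : Measurable C)
    (Z : Ω → γ) (hZ : Measurable Z)
    (hTC : CondIndepFun (MeasurableSpace.comap Z mγ) (hZ.comap_le) T C μ)
    (Y : Ω → ℝ) (hY : ∀ ω, Y ω = min (T ω) (C ω))
    (t : γ → ℝ) (ht : Measurable t) :
    condExp (MeasurableSpace.comap Z mγ) μ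
        (Set.indicator {ω | t (Z ω) ≤ Y ω} (fun _ => (1:ℝ)))
      =ᵐ[μ]
    fun ω =>
      condExp (MeasurableSpace.comap Z mγ) μ
          (Set.indicator {ω' | t (Z ω') ≤ T ω'} (fun _ => (1:ℝ))) ω *
      condExp (MeasurableSpace.comap Z mγ) μ
          (Set.indicator {ω' | t (Z ω') ≤ C ω'} (fun _ => (1:ℝ))) ω :=
  condexp_indicator_min_eq_product_general (mΩ := mΩ) μ (mγ := mγ) T C hT hC Z hZ hTC Y hY t ht
end

section
/- Under conditional independence of T and C given Z, if the conditional distribution function F₀(·|Z) of T given Z satisfies F₀(β'Z | Z) = τ almost surely and G₀(t|Z) = P(C ≥ t | Z), then E[ Z·( 𝟙(Y ≥ β'Z)/G₀(β'Z|Z) − (1−τ) ) ] = 0, provided G₀(β'Z|Z) ≥ η₀ > 0 almost surely. (Unbiasedness of the censored quantile regression estimating equation.) -/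
/-!
Given `Z`, the threshold `W = β'Z` is fixed and `{W ≤ Y} = {W ≤ T} ∩ {W ≤ C}`. Conditional
independence of `T` and `C` survives adjoining `σ(Z)` to both sides, so
`P(W ≤ Y | Z) = P(W ≤ T | Z) · P(W ≤ C | Z) = (1 - τ) · G₀(β'Z|Z)`. Hence the weighted indicator
`𝟙(W ≤ Y) / G₀` has conditional mean `1 - τ`, and pulling the bounded `σ(Z)`-measurable factor `Z`
out of the conditional expectation makes the estimating equation vanish.
-/

open MeasureTheory ProbabilityTheory MeasurableSpace

namespace ProbabilityTheory

variable {Ω : Type*} {m mΩ : MeasurableSpace Ω} {μ : Measure Ω}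

lemma condExp_inter_indicator_of_measurableSet_right [IsFiniteMeasure μ] {s a : Set Ω}
    (hs : MeasurableSet s) (ha : MeasurableSet[m] a) :
    μ⟦s ∩ a | m⟧ =ᵐ[μ] a.indicator (μ⟦s | m⟧) := by
  rw [Set.inter_comm, ← Set.indicator_indicator]
  exact condExp_indicator ((integrable_const 1).indicator hs) ha

lemma condExp_compl_indicator (hm : m ≤ mΩ) [IsFiniteMeasure μ] {s : Set Ω}
    (hs : MeasurableSet s) :
    μ⟦sᶜ | m⟧ =ᵐ[μ] 1 - μ⟦s | m⟧ := by
  rw [Set.indicator_compl]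
  filter_upwards [condExp_sub (m := m) (integrable_const (1 : ℝ))
    ((integrable_const 1).indicator hs)] with ω hω
  rw [hω, Pi.sub_apply, condExp_const hm]
  rfl

lemma isPiSystem_image2_inter (m₁ m₂ : MeasurableSpace Ω) :
    IsPiSystem (Set.image2 (· ∩ ·) {s | MeasurableSet[m₁] s} {a | MeasurableSet[m₂] a}) := by
  rintro _ ⟨s, hs, a, ha, rfl⟩ _ ⟨t, ht, b, hb, rfl⟩ -
  exact ⟨s ∩ t, hs.inter ht, a ∩ b, ha.inter hb, (Set.inter_inter_inter_comm s a t b).symm⟩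

lemma generateFrom_image2_inter (m₁ m₂ : MeasurableSpace Ω) :
    generateFrom (Set.image2 (· ∩ ·) {s | MeasurableSet[m₁] s} {a | MeasurableSet[m₂] a}) =
      m₁ ⊔ m₂ := by
  refine le_antisymm (generateFrom_le ?_) (sup_le (fun s hs ↦ ?_) (fun a ha ↦ ?_))
  · rintro _ ⟨s, hs, a, ha, rfl⟩
    exact (le_sup_left (a := m₁) _ hs).inter (le_sup_right (a := m₁) _ ha)
  · exact measurableSet_generateFrom ⟨s, hs, Set.univ, MeasurableSet.univ, Set.inter_univ s⟩
  · exact measurableSet_generateFrom ⟨Set.univ, MeasurableSet.univ, a, ha, Set.univ_inter a⟩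

theorem CondIndep.sup_conditioning [StandardBorelSpace Ω] [IsFiniteMeasure μ]
    {m₁ m₂ : MeasurableSpace Ω} (hm : m ≤ mΩ) (hm₁ : m₁ ≤ mΩ) (hm₂ : m₂ ≤ mΩ)
    (h : CondIndep m m₁ m₂ hm μ) : CondIndep m (m₁ ⊔ m) (m₂ ⊔ m) hm μ := by
  have hmeas : ∀ {m₀ : MeasurableSpace Ω}, m₀ ≤ mΩ →
      ∀ u ∈ Set.image2 (· ∩ ·) {s | MeasurableSet[m₀] s} {a | MeasurableSet[m] a},
        MeasurableSet[mΩ] u := by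
    rintro m₀ hm₀ _ ⟨s, hs, a, ha, rfl⟩
    exact (hm₀ s hs).inter (hm a ha)
  refine CondIndepSets.condIndep (sup_le hm₁ hm) (sup_le hm₂ hm) (isPiSystem_image2_inter m₁ m)
    (isPiSystem_image2_inter m₂ m) (generateFrom_image2_inter m₁ m).symm
    (generateFrom_image2_inter m₂ m).symm ?_
  rw [condIndepSets_iff _ _ _ _ (hmeas hm₁) (hmeas hm₂)]
  rintro _ _ ⟨s, hs, a, ha, rfl⟩ ⟨t, ht, b, hb, rfl⟩
  rw [condIndep_iff _ _ _ hm hm₁ hm₂] at h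
  calc μ⟦s ∩ a ∩ (t ∩ b) | m⟧
      = μ⟦s ∩ t ∩ (a ∩ b) | m⟧ := by rw [Set.inter_inter_inter_comm]
    _ =ᵐ[μ] (a ∩ b).indicator (μ⟦s ∩ t | m⟧) :=
        condExp_inter_indicator_of_measurableSet_right ((hm₁ s hs).inter (hm₂ t ht)) (ha.inter hb)
    _ =ᵐ[μ] (a ∩ b).indicator (μ⟦s | m⟧ * μ⟦t | m⟧) := by
        filter_upwards [h s t hs ht] with ω hω
        simp only [Set.indicator, hω]
    _ = a.indicator (μ⟦s | m⟧) * b.indicator (μ⟦t | m⟧) :=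
        funext fun ω ↦ Set.inter_indicator_mul _ _ ω
    _ =ᵐ[μ] μ⟦s ∩ a | m⟧ * μ⟦t ∩ b | m⟧ :=
        ((condExp_inter_indicator_of_measurableSet_right (hm₁ s hs) ha).mul
          (condExp_inter_indicator_of_measurableSet_right (hm₂ t ht) hb)).symm

lemma CondIndepFun.condExp_inter_le_eq_mul [StandardBorelSpace Ω] [IsFiniteMeasure μ]
    (hm : m ≤ mΩ) {T C W : Ω → ℝ} (hT : Measurable T) (hC : Measurable C)
    (hW : Measurable[m] W) (h : CondIndepFun m hm T C μ) :
    μ⟦{ω | W ω ≤ T ω} ∩ {ω | W ω ≤ C ω} | m⟧ =ᵐ[μ]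
      μ⟦{ω | W ω ≤ T ω} | m⟧ * μ⟦{ω | W ω ≤ C ω} | m⟧ := by
  have h' := ((condIndepFun_iff_condIndep _ _ _ _ _).1 h).sup_conditioning hm hT.comap_le
    hC.comap_le
  rw [condIndep_iff _ _ _ hm (sup_le hT.comap_le hm) (sup_le hC.comap_le hm)] at h'
  exact h' _ _
    (measurableSet_le (hW.mono le_sup_right le_rfl) ((comap_measurable T).mono le_sup_left le_rfl))
    (measurableSet_le (hW.mono le_sup_right le_rfl) ((comap_measurable C).mono le_sup_left le_rfl))

section InverseProbabilityWeighting

variable {T C W G : Ω → ℝ} {η : ℝ}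

lemma ite_le_min_div_eq_inv_mul_indicator :
    (fun ω ↦ (if W ω ≤ min (T ω) (C ω) then (1 : ℝ) else 0) / G ω) =
      G⁻¹ * ({ω | W ω ≤ T ω} ∩ {ω | W ω ≤ C ω}).indicator fun _ ↦ 1 := by
  ext ω
  by_cases h : W ω ≤ min (T ω) (C ω) <;> simp_all [div_eq_inv_mul]

lemma ae_norm_inv_le_inv (hη : 0 < η) (hGη : ∀ᵐ ω ∂μ, η ≤ G ω) :
    ∀ᵐ ω ∂μ, ‖(G ω)⁻¹‖ ≤ η⁻¹ := by
  filter_upwards [hGη] with ω hω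
  rw [norm_inv, Real.norm_of_nonneg (hη.le.trans hω)]
  exact inv_anti₀ hη hω

lemma integrable_indicator_le_inter_le (hm : m ≤ mΩ) [IsFiniteMeasure μ] (hT : Measurable T)
    (hC : Measurable C) (hW : Measurable[m] W) :
    Integrable (({ω | W ω ≤ T ω} ∩ {ω | W ω ≤ C ω}).indicator fun _ ↦ (1 : ℝ)) μ :=
  (integrable_const 1).indicator
    ((measurableSet_le (hW.mono hm le_rfl) hT).inter (measurableSet_le (hW.mono hm le_rfl) hC))

lemma integrable_ite_le_min_div (hm : m ≤ mΩ) [IsFiniteMeasure μ] (hT : Measurable T)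
    (hC : Measurable C) (hW : Measurable[m] W) (hG : Measurable[m] G) (hη : 0 < η)
    (hGη : ∀ᵐ ω ∂μ, η ≤ G ω) :
    Integrable (fun ω ↦ (if W ω ≤ min (T ω) (C ω) then (1 : ℝ) else 0) / G ω) μ := by
  rw [ite_le_min_div_eq_inv_mul_indicator]
  exact (integrable_indicator_le_inter_le hm hT hC hW).bdd_mul
    (hG.inv.mono hm le_rfl).aestronglyMeasurable (ae_norm_inv_le_inv hη hGη)

/-- Inverse-probability-of-censoring weighting: dividing by the censoring survival probability `G`
removes the censoring. -/
lemma condExp_ite_le_min_div [StandardBorelSpace Ω] [IsFiniteMeasure μ] (hm : m ≤ mΩ)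
    (hT : Measurable T) (hC : Measurable C) (hW : Measurable[m] W)
    (hTC : CondIndepFun m hm T C μ) (hGm : Measurable[m] G)
    (hG : μ⟦{ω | W ω ≤ C ω} | m⟧ =ᵐ[μ] G) (hη : 0 < η) (hGη : ∀ᵐ ω ∂μ, η ≤ G ω) :
    μ[fun ω ↦ (if W ω ≤ min (T ω) (C ω) then (1 : ℝ) else 0) / G ω | m] =ᵐ[μ]
      μ⟦{ω | W ω ≤ T ω} | m⟧ := by
  rw [ite_le_min_div_eq_inv_mul_indicator]
  filter_upwards [condExp_stronglyMeasurable_mul_of_bound hm hGm.inv.stronglyMeasurable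
      (integrable_indicator_le_inter_le hm hT hC hW) _ (ae_norm_inv_le_inv hη hGη),
    hTC.condExp_inter_le_eq_mul hm hT hC hW, hG, hGη] with ω hpull hindep hGω hηω
  rw [hpull, Pi.mul_apply, Pi.inv_apply, hindep, Pi.mul_apply, hGω, mul_comm,
    mul_inv_cancel_right₀ (hη.trans_le hηω).ne']

end InverseProbabilityWeighting

lemma integral_smul_eq_zero_of_condExp_eq_zero {E : Type*} [NormedAddCommGroup E]
    [NormedSpace ℝ E] [CompleteSpace E] (hm : m ≤ mΩ) [IsFiniteMeasure μ] {f : Ω → ℝ}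
    {Z : Ω → E} (hf : Integrable f μ) (hZ : StronglyMeasurable[m] Z) {B : ℝ}
    (hZB : ∀ᵐ ω ∂μ, ‖Z ω‖ ≤ B) (hf0 : μ[f | m] =ᵐ[μ] 0) :
    ∫ ω, f ω • Z ω ∂μ = 0 := by
  have hfZ : Integrable (f • Z) μ := hf.smul_bdd B (hZ.mono hm).aestronglyMeasurable hZB
  calc ∫ ω, f ω • Z ω ∂μ = ∫ ω, μ[f • Z | m] ω ∂μ := (integral_condExp hm).symm
    _ = ∫ ω, (μ[f | m] • Z) ω ∂μ :=
        integral_congr_ae (condExp_smul_of_aestronglyMeasurable_right hf hfZ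
          hZ.aestronglyMeasurable)
    _ = 0 := by
        rw [integral_congr_ae (g := fun _ ↦ (0 : E)) _, integral_zero]
        filter_upwards [hf0] with ω hω
        simp [hω]

end ProbabilityTheory

theorem censored_qr_estimating_equation_unbiased_general
    {Ω : Type*} [mΩ : MeasurableSpace Ω] [StandardBorelSpace Ω]
    (μ : Measure Ω) [IsProbabilityMeasure μ]
    {p : ℕ} (T C : Ω → ℝ) (hT : Measurable T) (hC : Measurable C)
    (Z : Ω → EuclideanSpace ℝ (Fin p)) (hZ : Measurable Z)
    (Bz : ℝ) (hZbd : ∀ ω, ‖Z ω‖ ≤ Bz)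
    (hTC : CondIndepFun (MeasurableSpace.comap Z inferInstance) (hZ.comap_le) T C μ)
    (Y : Ω → ℝ) (hY : ∀ ω, Y ω = min (T ω) (C ω))
    (β : EuclideanSpace ℝ (Fin p)) (τ : ℝ)
    (hF : condExp (MeasurableSpace.comap Z inferInstance) μ
        (Set.indicator {ω | T ω < (inner ℝ β (Z ω) : ℝ)} (fun _ => (1:ℝ)))
      =ᵐ[μ] fun _ => τ)
    (G0Z : Ω → ℝ)
    (hG0meas : Measurable[MeasurableSpace.comap Z inferInstance] G0Z)
    (hG0 : condExp (MeasurableSpace.comap Z inferInstance) μ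
        (Set.indicator {ω | (inner ℝ β (Z ω) : ℝ) ≤ C ω} (fun _ => (1:ℝ)))
      =ᵐ[μ] G0Z)
    (η₀ : ℝ) (hη₀ : 0 < η₀) (hG0pos : ∀ᵐ ω ∂μ, η₀ ≤ G0Z ω) :
    ∫ ω, (((if (inner ℝ β (Z ω) : ℝ) ≤ Y ω then (1:ℝ) else 0) / G0Z ω) - (1 - τ)) • Z ω ∂μ
      = 0 := by
  set m := MeasurableSpace.comap Z inferInstance
  set W : Ω → ℝ := fun ω ↦ inner ℝ β (Z ω)
  have hm : m ≤ mΩ := hZ.comap_le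
  have hW : Measurable[m] W := measurable_const.inner (comap_measurable Z)
  simp_rw [hY]
  have hsurv : μ⟦{ω | W ω ≤ T ω} | m⟧ =ᵐ[μ] fun _ ↦ 1 - τ := by
    have hcompl : {ω | W ω ≤ T ω} = {ω | T ω < W ω}ᶜ := by ext ω; simp
    filter_upwards [hcompl ▸ condExp_compl_indicator hm (measurableSet_lt hT (hW.mono hm le_rfl)),
      hF] with ω hω hτω
    rw [hω, Pi.sub_apply, hτω]
    rfl
  have hg := integrable_ite_le_min_div hm hT hC hW hG0meas hη₀ hG0pos
  refine integral_smul_eq_zero_of_condExp_eq_zero hm (hg.sub (integrable_const (1 - τ)))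
    (comap_measurable Z).stronglyMeasurable (ae_of_all _ hZbd) ?_
  refine (condExp_sub (m := m) hg (integrable_const (1 - τ))).trans ?_
  filter_upwards [condExp_ite_le_min_div hm hT hC hW hTC hG0meas hG0 hη₀ hG0pos, hsurv]
    with ω hipw hτω
  rw [Pi.sub_apply, hipw, hτω, condExp_const hm, sub_self, Pi.zero_apply]

/-- Unbiasedness of the censored quantile regression estimating equation: under conditional
independence of `T` and `C` given `Z`, if `F₀(β'Z|Z) = τ` a.s. and `G₀(β'Z|Z) ≥ η₀ > 0`
a.s., then `E[Z(𝟙(Y ≥ β'Z)/G₀(β'Z|Z) − (1−τ))] = 0`. -/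
theorem censored_qr_estimating_equation_unbiased
    {Ω : Type*} [mΩ : MeasurableSpace Ω] [StandardBorelSpace Ω] [Nonempty Ω]
    (μ : Measure Ω) [IsProbabilityMeasure μ]
    {p : ℕ} (T C : Ω → ℝ) (hT : Measurable T) (hC : Measurable C)
    (Z : Ω → EuclideanSpace ℝ (Fin p)) (hZ : Measurable Z)
    (Bz : ℝ) (hZbd : ∀ ω, ‖Z ω‖ ≤ Bz)
    (hTC : CondIndepFun (MeasurableSpace.comap Z inferInstance) (hZ.comap_le) T C μ)
    (Y : Ω → ℝ) (hY : ∀ ω, Y ω = min (T ω) (C ω))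
    (β : EuclideanSpace ℝ (Fin p)) (τ : ℝ) (hτ : τ ∈ Set.Ioo (0:ℝ) 1)
    (hF : condExp (MeasurableSpace.comap Z inferInstance) μ
        (Set.indicator {ω | T ω < (inner ℝ β (Z ω) : ℝ)} (fun _ => (1:ℝ)))
      =ᵐ[μ] fun _ => τ)
    (G0Z : Ω → ℝ)
    (hG0meas : Measurable[MeasurableSpace.comap Z inferInstance] G0Z)
    (hG0 : condExp (MeasurableSpace.comap Z inferInstance) μ
        (Set.indicator {ω | (inner ℝ β (Z ω) : ℝ) ≤ C ω} (fun _ => (1:ℝ)))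
      =ᵐ[μ] G0Z)
    (η₀ : ℝ) (hη₀ : 0 < η₀) (hG0pos : ∀ᵐ ω ∂μ, η₀ ≤ G0Z ω) :
    ∫ ω, (((if (inner ℝ β (Z ω) : ℝ) ≤ Y ω then (1:ℝ) else 0) / G0Z ω) - (1 - τ)) • Z ω ∂μ
      = 0 :=
  censored_qr_estimating_equation_unbiased_general (mΩ := mΩ) μ T C hT hC Z hZ Bz hZbd hTC Y hY β τ
    hF G0Z hG0meas hG0 η₀ hη₀ hG0pos
end

section
/- Let M : ℝ^p → ℝ^p be continuously differentiable in a convex neighborhood U of β₀ with M(β₀) = 0, and suppose the Jacobian DM(β) is negative definite uniformly on U (i.e., u' DM(β) u ≤ −c‖u‖² for some c > 0, all β ∈ U, all u). Then β₀ is the unique zero of M in U, and ‖M(β)‖ ≥ c‖β − β₀‖ for all β ∈ U. -/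
open scoped RealInnerProductSpace

/-!
Along the segment from `x` to `y`, the derivative of `t ↦ ⟪y - x, M(x + t (y - x))⟫` is
`⟪y - x, DM (y - x)⟫ ≤ -c ‖y - x‖²`, so the mean value theorem gives the strong monotonicity bound
`⟪y - x, M y - M x⟫ ≤ -c ‖y - x‖²`. With `x = β₀` and Cauchy–Schwarz this yields
`c ‖β - β₀‖ ≤ ‖M β‖`, which for `c > 0` also forces uniqueness of the zero.
-/

section

variable {E : Type*} [NormedAddCommGroup E] [InnerProductSpace ℝ E]

theorem inner_sub_map_sub_le_of_fderiv_inner_le {U : Set E} (hUopen : IsOpen U)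
    (hUconv : Convex ℝ U) {M : E → E} (hM : DifferentiableOn ℝ M U) {c : ℝ}
    (hneg : ∀ z ∈ U, ∀ u : E, ⟪u, fderiv ℝ M z u⟫ ≤ -c * ‖u‖ ^ 2) {x y : E}
    (hx : x ∈ U) (hy : y ∈ U) :
    ⟪y - x, M y - M x⟫ ≤ -c * ‖y - x‖ ^ 2 := by
  have hderiv : ∀ z ∈ U, HasFDerivWithinAt (fun z => ⟪y - x, M z⟫)
      ((innerSL ℝ (y - x)).comp (fderiv ℝ M z)) U z := fun z hz =>
    ((innerSL ℝ (y - x)).hasFDerivAt.comp z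
      (hM.differentiableAt (hUopen.mem_nhds hz)).hasFDerivAt).hasFDerivWithinAt
  obtain ⟨z, hz, hmvt⟩ := domain_mvt hderiv hUconv hx hy
  rw [inner_sub_right, hmvt]
  exact hneg z (hUconv.segment_subset hx hy hz) (y - x)

theorem mul_norm_le_norm_of_inner_le {u v : E} {c : ℝ} (h : ⟪u, v⟫ ≤ -c * ‖u‖ ^ 2) :
    c * ‖u‖ ≤ ‖v‖ := by
  rcases (norm_nonneg u).eq_or_lt with hu | hu
  · simp [← hu]
  have hcs : c * ‖u‖ ^ 2 ≤ ‖u‖ * ‖v‖ := by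
    linarith [neg_le_of_abs_le (abs_real_inner_le_norm u v)]
  exact le_of_mul_le_mul_left (by nlinarith) hu

end

/-- If `M` is `C¹` on an open convex neighborhood `U` of `β₀`, `M(β₀) = 0`, and the Jacobian
is uniformly negative definite on `U`, then `β₀` is the unique zero of `M` in `U` and
`‖M(β)‖ ≥ c ‖β − β₀‖` on `U`. -/
theorem unique_zero_of_negative_definite_jacobian
    {p : ℕ} (U : Set (EuclideanSpace ℝ (Fin p))) (hUopen : IsOpen U) (hUconv : Convex ℝ U)
    (β₀ : EuclideanSpace ℝ (Fin p)) (hβ₀ : β₀ ∈ U)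
    (M : EuclideanSpace ℝ (Fin p) → EuclideanSpace ℝ (Fin p))
    (hM : ContDiffOn ℝ 1 M U) (hM0 : M β₀ = 0) (c : ℝ) (hc : 0 < c)
    (hneg : ∀ β ∈ U, ∀ u : EuclideanSpace ℝ (Fin p),
      inner ℝ u (fderiv ℝ M β u)  ≤ -c * ‖u‖ ^ 2) :
    (∀ β ∈ U, M β = 0 → β = β₀) ∧ (∀ β ∈ U, c * ‖β - β₀‖ ≤ ‖M β‖) := by
  have hbound : ∀ β ∈ U, c * ‖β - β₀‖ ≤ ‖M β‖ := fun β hβ => by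
    simpa [hM0] using mul_norm_le_norm_of_inner_le
      (inner_sub_map_sub_le_of_fderiv_inner_le hUopen hUconv
        (hM.differentiableOn one_ne_zero) hneg hβ₀ hβ)
  refine ⟨fun β hβ hMβ => ?_, hbound⟩
  have h := hbound β hβ
  rw [hMβ, norm_zero] at h
  exact sub_eq_zero.mp (norm_le_zero_iff.mp (nonpos_of_mul_nonpos_right h hc))
end

section
/- If ‖Z‖ ≤ B almost surely, G, G* are survival-type functions bounded below by η₀ > 0, and β, β* ∈ ℝ^p, then the moment bound E‖m(β,G) − m(β*,G*)‖² ≤ 2(η₃·E|𝟙(Y ≥ Z'β) − 𝟙(Y ≥ Z'β*)| + η₄‖G − G*‖²_∞ + η₅‖β − β*‖²) holds for constants η₃, η₄, η₅ depending only on B, η₀ and a uniform density bound, where m(β,G) = Z(𝟙(Y ≥ Z'β)/G(Z'β|Z) − (1−τ)). -/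
/-!
The terms `(1 - τ) • Z` cancel, so `m(β,G) - m(β*,G*) = (I/G(Z'β|Z) - I*/G*(Z'β*|Z)) • Z` with
indicators `I, I* ∈ {0,1}`. Writing `I/g - I*/g* = (I - I*)/g + I*(g* - g)/(g g*)` bounds the scalar by
`|I - I*|/η₀ + |g - g*|/η₀²`, and `|g - g*| ≤ ‖G - G*‖_∞ + L |Z'β - Z'β*| ≤ ‖G - G*‖_∞ + L B ‖β - β*‖`.
Squaring with `(u + v)² ≤ 2(u² + v²)` and `|I - I*|² = |I - I*|` gives a pointwise bound, which is
then integrated.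
-/

open MeasureTheory
open scoped RealInnerProductSpace NNReal

lemma abs_div_sub_div_le {η₀ g g' a a' : ℝ} (hη₀ : 0 < η₀) (hg : η₀ ≤ g) (hg' : η₀ ≤ g')
    (ha' : |a'| ≤ 1) :
    |a / g - a' / g'| ≤ |a - a'| / η₀ + |g - g'| / η₀ ^ 2 := by
  have hg0 : 0 < g := hη₀.trans_le hg
  have hg'0 : 0 < g' := hη₀.trans_le hg'
  have hsplit : a / g - a' / g' = (a - a') / g + a' * (g' - g) / (g * g') := by
    field_simp; ring
  have hfirst : |(a - a') / g| ≤ |a - a'| / η₀ := by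
    rw [abs_div, abs_of_pos hg0]
    gcongr
  have hsecond : |a' * (g' - g) / (g * g')| ≤ |g - g'| / η₀ ^ 2 := by
    rw [abs_div, abs_mul, abs_of_pos (mul_pos hg0 hg'0), abs_sub_comm g']
    calc |a'| * |g - g'| / (g * g') ≤ 1 * |g - g'| / (η₀ * η₀) := by gcongr
      _ = |g - g'| / η₀ ^ 2 := by ring
  rw [hsplit]
  exact (abs_add_le _ _).trans (add_le_add hfirst hsecond)

lemma abs_sub_le_of_abs_sub_le_of_lipschitzWith {f g : ℝ → ℝ} {D : ℝ} {L : ℝ≥0}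
    (hfg : ∀ t, |f t - g t| ≤ D) (hg : LipschitzWith L g) (t t' : ℝ) :
    |f t - g t'| ≤ D + L * |t - t'| := by
  have hLip : |g t - g t'| ≤ L * |t - t'| := by
    simpa only [Real.dist_eq] using hg.dist_le_mul t t'
  exact (abs_sub_le _ (g t) _).trans (add_le_add (hfg t) hLip)

section EstimatingFunction

variable {Ω E : Type*} [NormedAddCommGroup E] [InnerProductSpace ℝ E]

noncomputable def upperIndicator (Y : Ω → ℝ) (Z : Ω → E) (β : E) (ω : Ω) : ℝ :=
  if ⟪β, Z ω⟫ ≤ Y ω then 1 else 0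

noncomputable def estimatingFunction (τ : ℝ) (Y : Ω → ℝ) (Z : Ω → E) (G : ℝ → E → ℝ) (β : E)
    (ω : Ω) : E :=
  (upperIndicator Y Z β ω / G ⟪β, Z ω⟫ (Z ω) - (1 - τ)) • Z ω

lemma upperIndicator_eq_zero_or_one (Y : Ω → ℝ) (Z : Ω → E) (β : E) (ω : Ω) :
    upperIndicator Y Z β ω = 0 ∨ upperIndicator Y Z β ω = 1 := by
  unfold upperIndicator
  split_ifs <;> simp

lemma abs_upperIndicator_sub_le_one (Y : Ω → ℝ) (Z : Ω → E) (β β' : E) (ω : Ω) :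
    |upperIndicator Y Z β ω - upperIndicator Y Z β' ω| ≤ 1 := by
  rcases upperIndicator_eq_zero_or_one Y Z β ω with h | h <;>
    rcases upperIndicator_eq_zero_or_one Y Z β' ω with h' | h' <;> norm_num [h, h']

lemma sq_abs_upperIndicator_sub (Y : Ω → ℝ) (Z : Ω → E) (β β' : E) (ω : Ω) :
    |upperIndicator Y Z β ω - upperIndicator Y Z β' ω| ^ 2 =
      |upperIndicator Y Z β ω - upperIndicator Y Z β' ω| := by
  rcases upperIndicator_eq_zero_or_one Y Z β ω with h | h <;>
    rcases upperIndicator_eq_zero_or_one Y Z β' ω with h' | h' <;> norm_num [h, h']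

variable {Y : Ω → ℝ} {Z : Ω → E}

lemma measurable_upperIndicator [MeasurableSpace Ω] [MeasurableSpace E] [OpensMeasurableSpace E]
    (hY : Measurable Y) (hZ : Measurable Z) (β : E) : Measurable (upperIndicator Y Z β) :=
  Measurable.ite (measurableSet_le ((continuous_const.inner continuous_id).measurable.comp hZ) hY)
    measurable_const measurable_const

lemma integrable_abs_upperIndicator_sub [MeasurableSpace Ω] [MeasurableSpace E]
    [OpensMeasurableSpace E] {μ : Measure Ω} [IsFiniteMeasure μ] (hY : Measurable Y)
    (hZ : Measurable Z) (β β' : E) :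
    Integrable (fun ω => |upperIndicator Y Z β ω - upperIndicator Y Z β' ω|) μ := by
  have hmeas := ((measurable_upperIndicator hY hZ β).sub (measurable_upperIndicator hY hZ β')).abs
  refine (integrable_const (1 : ℝ)).mono' hmeas.aestronglyMeasurable
    (Filter.Eventually.of_forall fun ω => ?_)
  simpa only [Real.norm_eq_abs, abs_abs] using abs_upperIndicator_sub_le_one Y Z β β' ω

lemma estimatingFunction_sub (τ : ℝ) (G G' : ℝ → E → ℝ) (β β' : E) (ω : Ω) :
    estimatingFunction τ Y Z G β ω - estimatingFunction τ Y Z G' β' ω =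
      (upperIndicator Y Z β ω / G ⟪β, Z ω⟫ (Z ω)
        - upperIndicator Y Z β' ω / G' ⟪β', Z ω⟫ (Z ω)) • Z ω := by
  rw [estimatingFunction, estimatingFunction, ← sub_smul, sub_sub_sub_cancel_right]

lemma sq_norm_estimatingFunction_sub_le {τ B η₀ D : ℝ} {L : ℝ≥0} {G G' : ℝ → E → ℝ}
    (hη₀ : 0 < η₀) (hG : ∀ t z, η₀ ≤ G t z) (hG' : ∀ t z, η₀ ≤ G' t z)
    (hLip : ∀ z, LipschitzWith L (fun t => G' t z)) (hD : ∀ t z, |G t z - G' t z| ≤ D)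
    (β β' : E) {ω : Ω} (hZB : ‖Z ω‖ ≤ B) :
    ‖estimatingFunction τ Y Z G β ω - estimatingFunction τ Y Z G' β' ω‖ ^ 2 ≤
      2 * B ^ 2 / η₀ ^ 2 * |upperIndicator Y Z β ω - upperIndicator Y Z β' ω|
        + 4 * B ^ 2 / η₀ ^ 4 * D ^ 2 + 4 * L ^ 2 * B ^ 4 / η₀ ^ 4 * ‖β - β'‖ ^ 2 := by
  set a := upperIndicator Y Z β ω
  set a' := upperIndicator Y Z β' ω
  set t := ⟪β, Z ω⟫
  set t' := ⟪β', Z ω⟫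
  set d := ‖β - β'‖
  have ha' : |a'| ≤ 1 := by
    rcases upperIndicator_eq_zero_or_one Y Z β' ω with h | h <;> norm_num [a', h]
  have hB : 0 ≤ B := (norm_nonneg _).trans hZB
  have htt' : |t - t'| ≤ B * d := by
    rw [← inner_sub_left, mul_comm]
    exact (abs_real_inner_le_norm _ _).trans (by gcongr)
  have hgg' : |G t (Z ω) - G' t' (Z ω)| ≤ D + L * (B * d) :=
    (abs_sub_le_of_abs_sub_le_of_lipschitzWith (fun s => hD s (Z ω)) (hLip (Z ω)) t t').trans
      (by gcongr)
  have hscalar : |a / G t (Z ω) - a' / G' t' (Z ω)| ≤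
      |a - a'| / η₀ + (D + L * (B * d)) / η₀ ^ 2 :=
    (abs_div_sub_div_le hη₀ (hG _ _) (hG' _ _) ha').trans (by gcongr)
  have hscalar_sq : |a / G t (Z ω) - a' / G' t' (Z ω)| ^ 2 ≤
      2 * (|a - a'| / η₀ ^ 2 + (D + L * (B * d)) ^ 2 / η₀ ^ 4) := by
    calc _ ≤ (|a - a'| / η₀ + (D + L * (B * d)) / η₀ ^ 2) ^ 2 := by gcongr
      _ ≤ 2 * ((|a - a'| / η₀) ^ 2 + ((D + L * (B * d)) / η₀ ^ 2) ^ 2) := add_sq_le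
      _ = _ := by rw [div_pow, div_pow, sq_abs_upperIndicator_sub]; ring
  have hshift_sq : (D + L * (B * d)) ^ 2 ≤ 2 * (D ^ 2 + (L * (B * d)) ^ 2) := add_sq_le
  rw [estimatingFunction_sub, norm_smul, Real.norm_eq_abs, mul_pow]
  calc _ ≤ 2 * (|a - a'| / η₀ ^ 2 + (D + L * (B * d)) ^ 2 / η₀ ^ 4) * B ^ 2 := by gcongr
    _ ≤ 2 * (|a - a'| / η₀ ^ 2 + 2 * (D ^ 2 + (L * (B * d)) ^ 2) / η₀ ^ 4) * B ^ 2 := by gcongr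
    _ = _ := by ring

end EstimatingFunction

theorem estimating_function_moment_bound_general
    (τ B η₀ : ℝ) (hη₀ : 0 < η₀) (L : NNReal) :
    ∃ η₃ η₄ η₅ : ℝ, 0 ≤ η₃ ∧ 0 ≤ η₄ ∧ 0 ≤ η₅ ∧
      ∀ {Ω : Type} [MeasurableSpace Ω] (μ : Measure Ω), IsProbabilityMeasure μ →
      ∀ {p : ℕ} (Y : Ω → ℝ) (Z : Ω → EuclideanSpace ℝ (Fin p)),
        Measurable Y → Measurable Z → (∀ ω, ‖Z ω‖ ≤ B) →
      ∀ (G Gstar : ℝ → EuclideanSpace ℝ (Fin p) → ℝ),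
        (∀ t z, η₀ ≤ G t z) → (∀ t z, η₀ ≤ Gstar t z) →
        (∀ z, LipschitzWith L (fun t => Gstar t z)) →
      ∀ (β βstar : EuclideanSpace ℝ (Fin p)) (D : ℝ),
        (∀ t z, |G t z - Gstar t z| ≤ D) →
        (∫ ω, ‖((if (inner ℝ β (Z ω) : ℝ) ≤ Y ω then (1:ℝ) else 0) / G (inner ℝ β (Z ω)) (Z ω)
                  - (1 - τ)) • Z ω
              - ((if (inner ℝ βstar (Z ω) : ℝ) ≤ Y ω then (1:ℝ) else 0)
                    / Gstar (inner ℝ βstar (Z ω)) (Z ω) - (1 - τ)) • Z ω‖ ^ 2 ∂μ)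
          ≤ 2 * (η₃ * (∫ ω, |(if (inner ℝ β (Z ω) : ℝ) ≤ Y ω then (1:ℝ) else 0)
                        - (if (inner ℝ βstar (Z ω) : ℝ) ≤ Y ω then (1:ℝ) else 0)| ∂μ)
              + η₄ * D ^ 2 + η₅ * ‖β - βstar‖ ^ 2) := by
  refine ⟨B ^ 2 / η₀ ^ 2, 2 * B ^ 2 / η₀ ^ 4, 2 * L ^ 2 * B ^ 4 / η₀ ^ 4,
    by positivity, by positivity, by positivity, ?_⟩
  intro Ω _ μ _ p Y Z hY hZ hZB G Gstar hG hGstar hLip β βstar D hD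
  change ∫ ω, ‖estimatingFunction τ Y Z G β ω - estimatingFunction τ Y Z Gstar βstar ω‖ ^ 2 ∂μ
    ≤ 2 * (_ * ∫ ω, |upperIndicator Y Z β ω - upperIndicator Y Z βstar ω| ∂μ + _ + _)
  have hint := integrable_abs_upperIndicator_sub (μ := μ) hY hZ β βstar
  calc _ ≤ ∫ ω, (2 * B ^ 2 / η₀ ^ 2 * |upperIndicator Y Z β ω - upperIndicator Y Z βstar ω|
          + 4 * B ^ 2 / η₀ ^ 4 * D ^ 2 + 4 * L ^ 2 * B ^ 4 / η₀ ^ 4 * ‖β - βstar‖ ^ 2) ∂μ :=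
        integral_mono_of_nonneg (Filter.Eventually.of_forall fun _ => by positivity)
          (((hint.const_mul _).add (integrable_const _)).add (integrable_const _))
          (Filter.Eventually.of_forall fun ω =>
            sq_norm_estimatingFunction_sub_le hη₀ hG hGstar hLip hD β βstar (hZB ω))
    _ = _ := by
        rw [integral_add (by fun_prop) (integrable_const _),
          integral_add (hint.const_mul _) (integrable_const _), integral_const_mul,
          integral_const, integral_const]
        simp only [probReal_univ, one_smul]
        ring

/-- Moment bound for the estimating function `m(β,G) = Z(𝟙(Y ≥ Z'β)/G(Z'β|Z) − (1−τ))`: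
there exist constants `η₃, η₄, η₅` depending only on `B`, `η₀`, `L` (and `τ`) such that
`E‖m(β,G) − m(β*,G*)‖² ≤ 2(η₃ E|𝟙(Y ≥ Z'β) − 𝟙(Y ≥ Z'β*)| + η₄‖G−G*‖²_∞ + η₅‖β−β*‖²)`. -/
theorem estimating_function_moment_bound
    (τ B η₀ : ℝ) (hτ : τ ∈ Set.Ioo (0:ℝ) 1) (hB : 0 ≤ B) (hη₀ : 0 < η₀) (L : NNReal) :
    ∃ η₃ η₄ η₅ : ℝ, 0 ≤ η₃ ∧ 0 ≤ η₄ ∧ 0 ≤ η₅ ∧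
      ∀ {Ω : Type} [MeasurableSpace Ω] (μ : Measure Ω), IsProbabilityMeasure μ →
      ∀ {p : ℕ} (Y : Ω → ℝ) (Z : Ω → EuclideanSpace ℝ (Fin p)),
        Measurable Y → Measurable Z → (∀ ω, ‖Z ω‖ ≤ B) →
      ∀ (G Gstar : ℝ → EuclideanSpace ℝ (Fin p) → ℝ),
        (∀ t z, η₀ ≤ G t z) → (∀ t z, η₀ ≤ Gstar t z) →
        (∀ z, LipschitzWith L (fun t => Gstar t z)) →
      ∀ (β βstar : EuclideanSpace ℝ (Fin p)) (D : ℝ),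
        (∀ t z, |G t z - Gstar t z| ≤ D) →
        (∫ ω, ‖((if (inner ℝ β (Z ω) : ℝ) ≤ Y ω then (1:ℝ) else 0) / G (inner ℝ β (Z ω)) (Z ω)
                  - (1 - τ)) • Z ω
              - ((if (inner ℝ βstar (Z ω) : ℝ) ≤ Y ω then (1:ℝ) else 0)
                    / Gstar (inner ℝ βstar (Z ω)) (Z ω) - (1 - τ)) • Z ω‖ ^ 2 ∂μ)
          ≤ 2 * (η₃ * (∫ ω, |(if (inner ℝ β (Z ω) : ℝ) ≤ Y ω then (1:ℝ) else 0)
                        - (if (inner ℝ βstar (Z ω) : ℝ) ≤ Y ω then (1:ℝ) else 0)| ∂μ)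
              + η₄ * D ^ 2 + η₅ * ‖β - βstar‖ ^ 2) :=
  estimating_function_moment_bound_general τ B η₀ hη₀ L
end
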